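/- Under the strong convexity assumption with parameter α and gradient bound G, with step sizes γ_t = 2/(α(t+1)) the Mirror Descent iterates satisfy, for every x ∈ X, ∑_{t=1}^T t·(⟨∇f_t(x_t), x_t - x⟩ - α V_{x_t}(x)) ≤ G²T/α. In particular the coefficient telescoping identity t((1/γ_t)V_{x_t}(x) - (1/γ_t)V_{x_{t+1}}(x) - α V_{x_t}(x)) = (α(t-1)t/2)V_{x_t}(x) - (α t(t+1)/2)V_{x_{t+1}}(x) holds. -/

import Mathlib

/-!
Optimality of `x_{t+1}` for the proximal step, combined with the three-point identity of the
Bregman divergence, gives `γ⟪ξ, x_t - x⟫ ≤ V_{x_t}(x) - V_{x_{t+1}}(x) + γ⟪ξ, x_t - x_{t+1}⟫ -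
V_{x_t}(x_{t+1})`; the last two terms are at most `γ²G²/2` by duality, Young's inequality and
`V_z(z') ≥ ‖z' - z‖²/2`, which strong monotonicity of `∇ω` gives along the segment `[z, z']`.
With `γ_t = 2/(α(t+1))` the weights `t` turn the divergence terms into a telescoping sum
`∑ (c_t - c_{t+1})`, `c_t = α(t-1)t/2 · V_{x_t}(x)`, with `c_1 = 0` and `c_{T+1} ≥ 0`, while each
weighted noise term `tγ_tG²/2` is at most `G²/α`.
-/

open scoped RealInnerProductSpace

def bregmanDiv {E : Type*} [NormedAddCommGroup E] [InnerProductSpace ℝ E]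
    (ω : E → ℝ) (gradω : E → E) (z z' : E) : ℝ :=
  ω z' - ω z - ⟪gradω z, z' - z⟫

section Bregman

variable {E : Type*} [NormedAddCommGroup E] [InnerProductSpace ℝ E]
  {ω : E → ℝ} {gradω : E → E}

theorem bregmanDiv_three_point (a p x : E) :
    bregmanDiv ω gradω a x - bregmanDiv ω gradω p x - bregmanDiv ω gradω a p =
      ⟪gradω p - gradω a, x - p⟫ := by
  simp only [bregmanDiv, inner_sub_left, inner_sub_right]
  ring

variable [CompleteSpace E]

theorem hasDerivAt_comp_add_smul {φ : E → ℝ} {g z h : E} {t : ℝ}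
    (hφ : HasGradientAt φ g (z + t • h)) :
    HasDerivAt (fun s : ℝ => φ (z + s • h)) ⟪g, h⟫ t := by
  have hline : HasDerivAt (fun s : ℝ => z + s • h) h t := by
    simpa using ((hasDerivAt_id t).smul_const h).const_add z
  simpa [Function.comp_def] using hφ.hasFDerivAt.comp_hasDerivAt t hline

theorem half_sq_le_bregmanDiv {X : Set E} (hX : Convex ℝ X) (N : Seminorm ℝ E)
    (hω : ∀ z ∈ X, HasGradientAt ω (gradω z) z)
    (hmono : ∀ z ∈ X, ∀ z' ∈ X, N (z - z') ^ 2 ≤ ⟪gradω z - gradω z', z - z'⟫)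
    {z z' : E} (hz : z ∈ X) (hz' : z' ∈ X) :
    N (z' - z) ^ 2 / 2 ≤ bregmanDiv ω gradω z z' := by
  set h := z' - z
  have hseg : ∀ t ∈ Set.Icc (0 : ℝ) 1, z + t • h ∈ X := fun t ht =>
    hX.add_smul_sub_mem hz hz' ht
  -- `ω` along the segment, minus its tangent at `z` and the quadratic lower bound to be proved.
  set F : ℝ → ℝ := fun t => ω (z + t • h) - t * ⟪gradω z, h⟫ - t ^ 2 / 2 * N h ^ 2
  have hF : ∀ t ∈ Set.Icc (0 : ℝ) 1,
      HasDerivAt F (⟪gradω (z + t • h), h⟫ - ⟪gradω z, h⟫ - t * N h ^ 2) t := by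
    intro t ht
    have hquad : HasDerivAt (fun s : ℝ => s ^ 2 / 2 * N h ^ 2) (t * N h ^ 2) t :=
      (((hasDerivAt_pow 2 t).div_const 2).mul_const _).congr_deriv (by ring)
    exact ((hasDerivAt_comp_add_smul (hω _ (hseg t ht))).sub
      ((hasDerivAt_id t).mul_const _)).sub hquad |>.congr_deriv (by simp)
  have hderiv_nonneg : ∀ t ∈ Set.Ioo (0 : ℝ) 1,
      0 ≤ ⟪gradω (z + t • h), h⟫ - ⟪gradω z, h⟫ - t * N h ^ 2 := by
    intro t ht
    have hmt := hmono _ (hseg t (Set.Ioo_subset_Icc_self ht)) z hz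
    rw [add_sub_cancel_left, map_smul_eq_mul, Real.norm_of_nonneg ht.1.le,
      inner_smul_right, inner_sub_left] at hmt
    nlinarith [ht.1]
  have hFmono : MonotoneOn F (Set.Icc 0 1) := by
    refine monotoneOn_of_deriv_nonneg (convex_Icc 0 1)
      (fun t ht => (hF t ht).continuousAt.continuousWithinAt) (fun t ht => ?_) (fun t ht => ?_)
    all_goals rw [interior_Icc] at ht
    · exact (hF t (Set.Ioo_subset_Icc_self ht)).differentiableAt.differentiableWithinAt
    · rw [(hF t (Set.Ioo_subset_Icc_self ht)).deriv]
      exact hderiv_nonneg t ht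
  have h01 := hFmono (Set.left_mem_Icc.mpr zero_le_one) (Set.right_mem_Icc.mpr zero_le_one)
    zero_le_one
  simp only [F, h, zero_smul, add_zero, one_smul, add_sub_cancel] at h01
  simp only [bregmanDiv]
  linarith

theorem IsMinOn.inner_sub_nonneg_of_hasGradientAt {X : Set E} (hX : Convex ℝ X) {φ : E → ℝ}
    {g p x : E} (hmin : IsMinOn φ X p) (hφ : HasGradientAt φ g p) (hp : p ∈ X) (hx : x ∈ X) :
    0 ≤ ⟪g, x - p⟫ := by
  simpa using hmin.localize.hasFDerivWithinAt_nonneg hφ.hasFDerivAt.hasFDerivWithinAt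
    (sub_mem_posTangentConeAt_of_segment_subset (hX.segment_subset hp hx))

theorem hasGradientAt_inner_add_bregmanDiv {γ : ℝ} {ξ a p : E} (hω : HasGradientAt ω (gradω p) p) :
    HasGradientAt (fun z => γ * ⟪ξ, z⟫ + bregmanDiv ω gradω a z)
      (γ • ξ + (gradω p - gradω a)) p := by
  rw [hasGradientAt_iff_hasFDerivAt]
  have hlin : ∀ c : E, HasFDerivAt (fun z => ⟪c, z⟫) (innerSL ℝ c) p :=
    fun c => (innerSL ℝ c).hasFDerivAt
  have := ((hlin ξ).const_mul γ).add ((hω.hasFDerivAt.sub_const (ω a)).sub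
    ((hlin (gradω a)).sub_const ⟪gradω a, a⟫))
  refine (this.congr_fderiv ?_).congr_of_eventuallyEq (.of_forall fun z => ?_)
  · ext v
    simp
  · simp [bregmanDiv, inner_sub_right]

theorem mirror_step_inner_le {X : Set E} (hX : Convex ℝ X) (N : Seminorm ℝ E) (dN : E → ℝ)
    (hdual : ∀ ξ z : E, ⟪ξ, z⟫ ≤ dN ξ * N z)
    (hω : ∀ z ∈ X, HasGradientAt ω (gradω z) z)
    (hmono : ∀ z ∈ X, ∀ z' ∈ X, N (z - z') ^ 2 ≤ ⟪gradω z - gradω z', z - z'⟫)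
    {γ G : ℝ} {ξ a p x : E} (hγ : 0 ≤ γ) (hξ : dN ξ ≤ G) (ha : a ∈ X) (hp : p ∈ X) (hx : x ∈ X)
    (hmin : IsMinOn (fun z => γ * ⟪ξ, z⟫ + bregmanDiv ω gradω a z) X p) :
    γ * ⟪ξ, a - x⟫ ≤ bregmanDiv ω gradω a x - bregmanDiv ω gradω p x + γ ^ 2 * G ^ 2 / 2 := by
  have hopt := hmin.inner_sub_nonneg_of_hasGradientAt hX
    (hasGradientAt_inner_add_bregmanDiv (hω p hp)) hp hx
  rw [inner_add_left, ← bregmanDiv_three_point, real_inner_smul_left] at hopt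
  have hdist := half_sq_le_bregmanDiv hX N hω hmono ha hp
  rw [map_sub_rev] at hdist
  have hdual_step : γ * ⟪ξ, a - p⟫ ≤ γ * G * N (a - p) := by
    rw [mul_assoc]
    exact mul_le_mul_of_nonneg_left ((hdual ξ _).trans
      (mul_le_mul_of_nonneg_right hξ (apply_nonneg N _))) hγ
  have hyoung := two_mul_le_add_sq (γ * G) (N (a - p))
  have hsplit : ⟪ξ, a - x⟫ = ⟪ξ, a - p⟫ - ⟪ξ, x - p⟫ := by
    rw [← inner_sub_right, sub_sub_sub_cancel_right]
  rw [hsplit]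
  nlinarith

end Bregman

theorem step_size_coeff_identity (s α A B : ℝ) :
    (s + 1) * (1 / (2 / (α * (s + 2))) * A - 1 / (2 / (α * (s + 2))) * B - α * A) =
      α * s * (s + 1) / 2 * A - α * (s + 1) * (s + 2) / 2 * B := by
  rw [one_div_div]
  ring

theorem weighted_step_le {s α u A B G : ℝ} (hα : 0 < α) (hs : 0 ≤ s)
    (h : 2 / (α * (s + 2)) * u ≤ A - B + (2 / (α * (s + 2))) ^ 2 * G ^ 2 / 2) :
    (s + 1) * (u - α * A) ≤
      α * s * (s + 1) / 2 * A - α * (s + 1) * (s + 2) / 2 * B + G ^ 2 / α := by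
  have hu : u ≤ 1 / (2 / (α * (s + 2))) * A - 1 / (2 / (α * (s + 2))) * B +
      G ^ 2 / (α * (s + 2)) := by
    rw [one_div_div]
    field_simp at h ⊢
    linarith
  have hnoise : (s + 1) * (G ^ 2 / (α * (s + 2))) ≤ G ^ 2 / α := by
    rw [mul_div_assoc', div_le_div_iff₀ (by positivity) hα]
    nlinarith [sq_nonneg G]
  calc (s + 1) * (u - α * A)
      ≤ (s + 1) * (1 / (2 / (α * (s + 2))) * A - 1 / (2 / (α * (s + 2))) * B - α * A) +
          (s + 1) * (G ^ 2 / (α * (s + 2))) := by nlinarith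
    _ ≤ _ := by rw [step_size_coeff_identity]; linarith

theorem Finset.sum_range_le_sub_add_mul {a c : ℕ → ℝ} {b : ℝ} {T : ℕ}
    (h : ∀ i < T, a i ≤ c i - c (i + 1) + b) :
    ∑ i ∈ Finset.range T, a i ≤ c 0 - c T + T * b := by
  calc ∑ i ∈ Finset.range T, a i ≤ ∑ i ∈ Finset.range T, (c i - c (i + 1) + b) :=
        Finset.sum_le_sum fun i hi => h i (Finset.mem_range.mp hi)
    _ = c 0 - c T + T * b := by
        rw [Finset.sum_add_distrib, Finset.sum_range_sub', Finset.sum_const, Finset.card_range,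
          nsmul_eq_mul]

-- The time step `t` of the paper is `i + 1` for `i ∈ Finset.range T`.
theorem mirror_descent_strongly_convex_telescoping_general {n T : ℕ}
    (X : Set (EuclideanSpace ℝ (Fin n))) (hXconv : Convex ℝ X)
    (nrm dnrm : EuclideanSpace ℝ (Fin n) → ℝ)
    (hnrm_homog : ∀ (c : ℝ) (a : EuclideanSpace ℝ (Fin n)), nrm (c • a) = |c| * nrm a)
    (hnrm_tri : ∀ a b : EuclideanSpace ℝ (Fin n), nrm (a + b) ≤ nrm a + nrm b)
    (hdual : ∀ ξ z : EuclideanSpace ℝ (Fin n), ⟪ξ, z⟫ ≤ dnrm ξ * nrm z)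
    (ω : EuclideanSpace ℝ (Fin n) → ℝ)
    (gradω : EuclideanSpace ℝ (Fin n) → EuclideanSpace ℝ (Fin n))
    (hdiff : ∀ z ∈ X, HasGradientAt ω (gradω z) z)
    (hstrong : ∀ z' ∈ X, ∀ z'' ∈ X,
      ⟪gradω z' - gradω z'', z' - z''⟫ ≥ (nrm (z' - z'')) ^ 2)
    (V : EuclideanSpace ℝ (Fin n) → EuclideanSpace ℝ (Fin n) → ℝ)
    (hV : ∀ z z', V z z' = ω z' - ω z - ⟪gradω z, z' - z⟫)
    (α : ℝ) (hα : 0 < α)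
    (gradf : ℕ → EuclideanSpace ℝ (Fin n) → EuclideanSpace ℝ (Fin n))
    (G : ℝ) (hGbound : ∀ i < T, ∀ x ∈ X, dnrm (gradf i x) ≤ G)
    (γ : ℕ → ℝ) (hγ : ∀ i, γ i = 2 / (α * ((i : ℝ) + 2)))
    (xs : ℕ → EuclideanSpace ℝ (Fin n))
    (hx0 : xs 0 ∈ X)
    (hupdate : ∀ i < T, xs (i + 1) ∈ X ∧
      IsMinOn (fun z => γ i * ⟪gradf i (xs i), z⟫ + V (xs i) z) X (xs (i + 1))) :
    (∀ x ∈ X,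
      ∑ i ∈ Finset.range T,
          ((i : ℝ) + 1) * (⟪gradf i (xs i), xs i - x⟫ - α * V (xs i) x) ≤
        G ^ 2 * T / α) ∧
    (∀ x ∈ X, ∀ i < T,
      ((i : ℝ) + 1) *
          (1 / γ i * V (xs i) x - 1 / γ i * V (xs (i + 1)) x - α * V (xs i) x) =
        α * (i : ℝ) * ((i : ℝ) + 1) / 2 * V (xs i) x -
          α * ((i : ℝ) + 1) * ((i : ℝ) + 2) / 2 * V (xs (i + 1)) x) := by
  obtain rfl : V = bregmanDiv ω gradω := funext₂ hV
  let N : Seminorm ℝ (EuclideanSpace ℝ (Fin n)) :=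
    Seminorm.of nrm hnrm_tri fun c a => by rw [hnrm_homog, Real.norm_eq_abs]
  have hmem : ∀ i ≤ T, xs i ∈ X := by
    rintro (_ | i) hi
    exacts [hx0, (hupdate i (by omega)).1]
  refine ⟨fun x hx => ?_, fun x _ i _ => by rw [hγ]; exact step_size_coeff_identity _ _ _ _⟩
  set c : ℕ → ℝ := fun j => α * j * (j + 1) / 2 * bregmanDiv ω gradω (xs j) x
  have hstep : ∀ i < T, ((i : ℝ) + 1) *
      (⟪gradf i (xs i), xs i - x⟫ - α * bregmanDiv ω gradω (xs i) x) ≤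
        c i - c (i + 1) + G ^ 2 / α := by
    intro i hi
    have hone := mirror_step_inner_le hXconv N dnrm hdual hdiff hstrong (hγ i ▸ by positivity)
      (hGbound i hi _ (hmem i hi.le)) (hmem i hi.le) (hupdate i hi).1 hx (hupdate i hi).2
    rw [hγ] at hone
    convert weighted_step_le hα (Nat.cast_nonneg i) hone using 3
    simp only [c]
    push_cast
    ring
  have hc0 : c 0 = 0 := by simp [c]
  have hcT : 0 ≤ c T := mul_nonneg (by positivity) <|
    (half_sq_le_bregmanDiv hXconv N hdiff hstrong (hmem T le_rfl) hx).trans' (by positivity)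
  calc _ ≤ c 0 - c T + T * (G ^ 2 / α) := Finset.sum_range_le_sub_add_mul hstep
    _ ≤ T * (G ^ 2 / α) := by linarith
    _ = G ^ 2 * T / α := by ring

/-- Under strong convexity with parameter `α` and gradient bound `G`,
with step sizes `γ_t = 2/(α(t+1))` the Mirror Descent iterates satisfy, for every
`x ∈ X`, `∑_{t=1}^T t·(⟨∇f_t(x_t), x_t - x⟩ - α V_{x_t}(x)) ≤ G²T/α`, and the
coefficient telescoping identity
`t((1/γ_t)V_{x_t}(x) - (1/γ_t)V_{x_{t+1}}(x) - α V_{x_t}(x))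
  = (α(t-1)t/2)V_{x_t}(x) - (α t(t+1)/2)V_{x_{t+1}}(x)` holds.
Index `i ∈ Finset.range T` represents time step `t = i+1`. -/
theorem mirror_descent_strongly_convex_telescoping {n T : ℕ} (hT : 0 < T)
    (X : Set (EuclideanSpace ℝ (Fin n))) (hXconv : Convex ℝ X) (hXcomp : IsCompact X)
    (nrm dnrm : EuclideanSpace ℝ (Fin n) → ℝ)
    (hnrm_homog : ∀ (c : ℝ) (a : EuclideanSpace ℝ (Fin n)), nrm (c • a) = |c| * nrm a)
    (hnrm_tri : ∀ a b : EuclideanSpace ℝ (Fin n), nrm (a + b) ≤ nrm a + nrm b)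
    (hdual : ∀ ξ z : EuclideanSpace ℝ (Fin n), ⟪ξ, z⟫ ≤ dnrm ξ * nrm z)
    (ω : EuclideanSpace ℝ (Fin n) → ℝ)
    (gradω : EuclideanSpace ℝ (Fin n) → EuclideanSpace ℝ (Fin n))
    (hdiff : ∀ z ∈ X, HasGradientAt ω (gradω z) z)
    (hstrong : ∀ z' ∈ X, ∀ z'' ∈ X,
      ⟪gradω z' - gradω z'', z' - z''⟫ ≥ (nrm (z' - z'')) ^ 2)
    (V : EuclideanSpace ℝ (Fin n) → EuclideanSpace ℝ (Fin n) → ℝ)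
    (hV : ∀ z z', V z z' = ω z' - ω z - ⟪gradω z, z' - z⟫)
    (α : ℝ) (hα : 0 < α)
    (f : ℕ → EuclideanSpace ℝ (Fin n) → ℝ)
    (gradf : ℕ → EuclideanSpace ℝ (Fin n) → EuclideanSpace ℝ (Fin n))
    (hfdiff : ∀ i < T, ∀ x ∈ X, HasGradientAt (f i) (gradf i x) x)
    (hfsc : ∀ i < T, ∀ x ∈ X, ∀ x' ∈ X,
      f i x ≤ f i x' + ⟪gradf i x, x - x'⟫ - α * V x x')
    (G : ℝ) (hG : 0 < G) (hGbound : ∀ i < T, ∀ x ∈ X, dnrm (gradf i x) ≤ G)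
    (γ : ℕ → ℝ) (hγ : ∀ i, γ i = 2 / (α * ((i : ℝ) + 2)))
    (xs : ℕ → EuclideanSpace ℝ (Fin n))
    (hx0 : xs 0 ∈ X) (hx0center : IsMinOn ω X (xs 0))
    (hupdate : ∀ i < T, xs (i + 1) ∈ X ∧
      IsMinOn (fun z => γ i * ⟪gradf i (xs i), z⟫ + V (xs i) z) X (xs (i + 1))) :
    (∀ x ∈ X,
      ∑ i ∈ Finset.range T,
          ((i : ℝ) + 1) * (⟪gradf i (xs i), xs i - x⟫ - α * V (xs i) x) ≤
        G ^ 2 * T / α) ∧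
    (∀ x ∈ X, ∀ i < T,
      ((i : ℝ) + 1) *
          (1 / γ i * V (xs i) x - 1 / γ i * V (xs (i + 1)) x - α * V (xs i) x) =
        α * (i : ℝ) * ((i : ℝ) + 1) / 2 * V (xs i) x -
          α * ((i : ℝ) + 1) * ((i : ℝ) + 2) / 2 * V (xs (i + 1)) x) :=
  mirror_descent_strongly_convex_telescoping_general X hXconv nrm dnrm hnrm_homog hnrm_tri hdual ω
    gradω hdiff hstrong V hV α hα gradf G hGbound γ hγ xs hx0 hupdate
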